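/- arXiv:2203.10813 — 5 statements merged into one kernel-verified Lean document; each statement's English description precedes it below -/
import Mathlib

section
/- Let p be a positive integer and j an integer with 2 ≤ j ≤ floor(p/2)+1. Then the double sum over i from 1 to p-1 and m from 0 to p+2-2j of (-1)^i * binom(p,i) * binom(p+2j, m-1+2j) * binom(p+2-2j, m) * i^(p+2-2j-m) * (i-p)^m equals 2*(-1)^(p+1) * binom(p+2j, 2j-1) * p^(p+2-2j). -/
/-!
For fixed `i`, the inner sum is a polynomial in `i` of degree at most `q = p + 2 - 2j < p`, so its
alternating binomial sum over `i = 0, …, p` vanishes (a `p`-th forward difference). The two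
boundary terms `i = 0` (only `m = q` survives) and `i = p` (only `m = 0` survives) both equal
`(-1)^p * C(p + 2j, 2j - 1) * p^q`, which gives the claim.
-/

open Finset Polynomial

variable {R : Type*} [CommRing R]

theorem Polynomial.sum_range_neg_one_pow_mul_choose_mul_eval_eq_zero {P : R[X]} {n : ℕ}
    (hP : P.natDegree < n) :
    ∑ k ∈ range (n + 1), (-1 : R) ^ k * n.choose k * P.eval (k : R) = 0 := by
  have h := fwdDiff_iter_eq_sum_shift (1 : R) P.eval n 0
  rw [P.fwdDiff_iter_eq_zero_of_degree_lt hP, Pi.zero_apply, eq_comm] at h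
  have hsign : ∀ k ∈ range (n + 1), (-1 : R) ^ k = (-1) ^ n * (-1) ^ (n - k) := fun k hk => by
    have hk : k ≤ n := Nat.lt_succ_iff.mp (mem_range.mp hk)
    rw [← Nat.sub_add_cancel hk, pow_add, Nat.add_sub_cancel, mul_comm, ← mul_assoc,
      ← pow_add, Even.neg_one_pow ⟨_, rfl⟩, one_mul]
  calc ∑ k ∈ range (n + 1), (-1 : R) ^ k * n.choose k * P.eval (k : R)
      = (-1) ^ n * ∑ k ∈ range (n + 1), ((-1 : ℤ) ^ (n - k) * n.choose k) • P.eval (0 + k • 1) := by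
        rw [mul_sum]
        refine sum_congr rfl fun k hk => ?_
        rw [hsign k hk]
        simp only [nsmul_eq_mul, mul_one, zero_add, zsmul_eq_mul, Int.cast_mul, Int.cast_pow,
          Int.cast_neg, Int.cast_one, Int.cast_natCast]
        ring
    _ = 0 := by rw [h, mul_zero]

theorem sum_range_neg_one_pow_mul_choose_mul_pow_mul_sub_pow_eq_zero {n a b : ℕ}
    (hab : a + b < n) (x : R) :
    ∑ k ∈ range (n + 1), (-1 : R) ^ k * n.choose k * (k : R) ^ a * ((k : R) - x) ^ b = 0 := by
  have hdeg : (X ^ a * (X - C x) ^ b : R[X]).natDegree < n :=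
    lt_of_le_of_lt (by compute_degree) hab
  simpa [mul_assoc] using sum_range_neg_one_pow_mul_choose_mul_eval_eq_zero hdeg

theorem sum_range_mul_zero_pow_sub_mul_pow (c : ℕ → R) (q : ℕ) (y : R) :
    ∑ m ∈ range (q + 1), c m * 0 ^ (q - m) * y ^ m = c q * y ^ q := by
  rw [sum_eq_single_of_mem q (self_mem_range_succ q) fun m hm hmq => ?_, Nat.sub_self, pow_zero,
    mul_one]
  rw [zero_pow (by have := mem_range.mp hm; omega), mul_zero, zero_mul]

theorem sum_range_mul_pow_sub_mul_zero_pow (c : ℕ → R) (q : ℕ) (x : R) :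
    ∑ m ∈ range (q + 1), c m * x ^ (q - m) * 0 ^ m = c 0 * x ^ q := by
  rw [sum_eq_single_of_mem 0 (by simp) fun m _ hm => by rw [zero_pow hm, mul_zero],
    Nat.sub_zero, pow_zero, mul_one]

theorem sum_range_add_one_eq_add_add_sum_Icc {M : Type*} [AddCommMonoid M] (f : ℕ → M) {n : ℕ}
    (hn : 0 < n) : ∑ i ∈ range (n + 1), f i = f 0 + f n + ∑ i ∈ Icc 1 (n - 1), f i := by
  obtain ⟨n, rfl⟩ : ∃ m, n = m + 1 := ⟨n - 1, by omega⟩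
  rw [sum_range_succ, sum_range_succ', Nat.add_sub_cancel, ← Ico_add_one_right_eq_Icc,
    sum_Ico_eq_sum_range, Nat.add_sub_cancel]
  simp only [add_comm 1]
  abel

theorem stmt_3_general (p j : ℕ) (hj2 : 2 ≤ j) (hj : j ≤ p / 2 + 1) :
    ∑ i ∈ Finset.Icc 1 (p - 1), ∑ m ∈ Finset.range (p + 3 - 2 * j),
        (-1 : ℤ) ^ i * (p.choose i : ℤ) * ((p + 2 * j).choose (m + 2 * j - 1) : ℤ)
          * ((p + 2 - 2 * j).choose m : ℤ) * (i : ℤ) ^ (p + 2 - 2 * j - m)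
          * ((i : ℤ) - (p : ℤ)) ^ m
      = 2 * (-1 : ℤ) ^ (p + 1) * ((p + 2 * j).choose (2 * j - 1) : ℤ)
          * (p : ℤ) ^ (p + 2 - 2 * j) := by
  set q := p + 2 - 2 * j
  rw [show p + 3 - 2 * j = q + 1 by omega]
  set f : ℕ → ℤ := fun i => ∑ m ∈ range (q + 1),
    (-1 : ℤ) ^ i * (p.choose i : ℤ) * ((p + 2 * j).choose (m + 2 * j - 1) : ℤ)
      * (q.choose m : ℤ) * (i : ℤ) ^ (q - m) * ((i : ℤ) - (p : ℤ)) ^ m with hf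
  have hfull : ∑ i ∈ range (p + 1), f i = 0 := by
    rw [sum_comm]
    refine sum_eq_zero fun m hm => ?_
    have hm : m ≤ q := Nat.lt_succ_iff.mp (mem_range.mp hm)
    calc _ = ((p + 2 * j).choose (m + 2 * j - 1) * q.choose m : ℤ) * ∑ i ∈ range (p + 1),
            (-1 : ℤ) ^ i * p.choose i * (i : ℤ) ^ (q - m) * ((i : ℤ) - p) ^ m := by
          rw [mul_sum]
          exact sum_congr rfl fun i _ => by ring
      _ = 0 := by
          rw [sum_range_neg_one_pow_mul_choose_mul_pow_mul_sub_pow_eq_zero (by omega), mul_zero]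
  have hf0 : f 0 = (-1) ^ p * ((p + 2 * j).choose (2 * j - 1) : ℤ) * (p : ℤ) ^ q := by
    simp only [hf, Nat.cast_zero, zero_sub]
    have hsign : (-1 : ℤ) ^ p = (-1) ^ q := by
      rw [show p = q + 2 * (j - 1) by omega, pow_add, pow_mul, neg_one_sq, one_pow, mul_one]
    rw [sum_range_mul_zero_pow_sub_mul_pow, show q + 2 * j - 1 = p + 1 by omega,
      Nat.choose_symm_of_eq_add (show p + 2 * j = (p + 1) + (2 * j - 1) by omega),
      neg_pow (p : ℤ), hsign]
    simp only [pow_zero, Nat.choose_zero_right, Nat.choose_self, Nat.cast_one, one_mul, mul_one]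
    ring
  have hfp : f p = (-1) ^ p * ((p + 2 * j).choose (2 * j - 1) : ℤ) * (p : ℤ) ^ q := by
    simp only [hf, sub_self]
    rw [sum_range_mul_pow_sub_mul_zero_pow]
    simp
  rw [sum_range_add_one_eq_add_add_sum_Icc f (by omega), hf0, hfp] at hfull
  rw [pow_succ]
  linear_combination hfull

theorem stmt_3 (p j : ℕ) (hp : 0 < p) (hj2 : 2 ≤ j) (hj : j ≤ p / 2 + 1) :
    ∑ i ∈ Finset.Icc 1 (p - 1), ∑ m ∈ Finset.range (p + 3 - 2 * j),
        (-1 : ℤ) ^ i * (p.choose i : ℤ) * ((p + 2 * j).choose (m + 2 * j - 1) : ℤ)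
          * ((p + 2 - 2 * j).choose m : ℤ) * (i : ℤ) ^ (p + 2 - 2 * j - m)
          * ((i : ℤ) - (p : ℤ)) ^ m
      = 2 * (-1 : ℤ) ^ (p + 1) * ((p + 2 * j).choose (2 * j - 1) : ℤ)
          * (p : ℤ) ^ (p + 2 - 2 * j) :=
  stmt_3_general p j hj2 hj
end

section
/- Let p be a positive integer and j = 1. Then the double sum over i from 1 to p-1 and m from 0 to p of (-1)^i * binom(p,i) * binom(p+2, m+1) * binom(p, m) * i^(p-m) * (i-p)^m equals 2*(-1)^p * ((2p+1)!/(p+1)! - (p+2)*p^p). -/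
/-!
For a monic polynomial `P` of degree `n`, the `n`-th forward difference of `P` is `n!`, i.e.
`∑ i ≤ n, (-1)^i C(n,i) P(i) = (-1)^n n!`. Taking `P = X^(p-m) (X - p)^m` makes the sum over
`0 ≤ i ≤ p` collapse, for every `m`, to `(-1)^p p!`; the remaining sum over `m` is Vandermonde's
`C(2p+2, p+1) = 2 C(2p+1, p)`. The boundary terms `i = 0` and `i = p` each contribute
`(-1)^p (p+2) p^p`, since only `m = p`, resp. `m = 0`, survives there.
-/

open Finset Polynomial Nat

theorem sum_Icc_one_pred_eq_sub {M : Type*} [AddCommGroup M] (f : ℕ → M) {p : ℕ}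
    (hp : 0 < p) :
    ∑ i ∈ Icc 1 (p - 1), f i = ∑ i ∈ range (p + 1), f i - f 0 - f p := by
  obtain ⟨q, rfl⟩ := Nat.exists_eq_add_of_lt hp
  rw [Nat.add_sub_cancel, ← Ico_add_one_right_eq_Icc, sum_Ico_eq_sum_range, sum_range_succ,
    sum_range_succ', Nat.add_sub_cancel]
  simp only [add_comm 1]
  abel

theorem neg_one_pow_sub_of_le {R : Type*} [Monoid R] [HasDistribNeg R] {n k : ℕ} (hk : k ≤ n) :
    (-1 : R) ^ (n - k) = (-1) ^ n * (-1) ^ k := by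
  obtain ⟨j, rfl⟩ := Nat.exists_eq_add_of_le hk
  rw [Nat.add_sub_cancel_left, pow_add, ((Commute.neg_one_left _).pow_left k).eq, mul_assoc,
    ← pow_add, ← two_mul, pow_mul, neg_one_sq, one_pow, mul_one]

theorem Polynomial.Monic.sum_range_alternating_choose_mul_eval {R : Type*} [CommRing R]
    {P : R[X]} (hP : P.Monic) :
    ∑ k ∈ range (P.natDegree + 1), (-1 : R) ^ k * P.natDegree.choose k * P.eval (k : R)
      = (-1) ^ P.natDegree * P.natDegree ! := by
  have h := congr_fun P.fwdDiff_iter_degree_eq_factorial 0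
  rw [fwdDiff_iter_eq_sum_shift, hP.leadingCoeff, one_smul, Pi.natCast_apply] at h
  have hsign : ∀ k ∈ range (P.natDegree + 1),
      ((-1 : ℤ) ^ (P.natDegree - k) * P.natDegree.choose k) • P.eval (0 + k • 1 : R)
        = (-1) ^ P.natDegree * ((-1) ^ k * P.natDegree.choose k * P.eval (k : R)) := by
    intro k hk
    rw [zsmul_eq_mul, zero_add, nsmul_one, Int.cast_mul, Int.cast_pow, Int.cast_neg, Int.cast_one,
      neg_one_pow_sub_of_le (Nat.lt_succ_iff.mp (mem_range.mp hk)), Int.cast_natCast]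
    ring
  rw [sum_congr rfl hsign, ← mul_sum] at h
  rw [← h, ← mul_assoc, ← pow_add, ← two_mul, pow_mul, neg_one_sq, one_pow, one_mul]

theorem sum_range_alternating_choose_mul_pow_mul_sub_pow {R : Type*} [CommRing R] [Nontrivial R]
    {n : ℕ} (a b : ℕ) (hn : a + b = n) :
    ∑ i ∈ range (n + 1), (-1 : R) ^ i * n.choose i * (i : R) ^ a * ((i : R) - n) ^ b
      = (-1) ^ n * n ! := by
  have hP : ((X : R[X]) ^ a * (X - C (n : R)) ^ b).Monic :=
    (monic_X_pow a).mul ((monic_X_sub_C _).pow b)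
  have hdeg : ((X : R[X]) ^ a * (X - C (n : R)) ^ b).natDegree = n := by
    rw [(monic_X_pow a).natDegree_mul ((monic_X_sub_C _).pow b), natDegree_X_pow,
      (monic_X_sub_C _).natDegree_pow, natDegree_X_sub_C, mul_one, hn]
  have h := hP.sum_range_alternating_choose_mul_eval
  simpa only [hdeg, eval_mul, eval_pow, eval_X, eval_sub, eval_C, ← mul_assoc] using h

theorem sum_range_choose_succ_mul_choose (p q : ℕ) :
    ∑ m ∈ range (p + 1), q.choose (m + 1) * p.choose m = (q + p).choose (p + 1) := by
  rw [add_choose_eq,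
    Finset.Nat.sum_antidiagonal_eq_sum_range_succ (fun i j ↦ q.choose i * p.choose j)]
  conv_rhs => rw [sum_range_succ', Nat.sub_zero, choose_succ_self, mul_zero, add_zero]
  refine sum_congr rfl fun m hm ↦ ?_
  have hm : m ≤ p := Nat.lt_succ_iff.mp (mem_range.mp hm)
  rw [Nat.add_sub_add_right, choose_symm hm]

theorem choose_two_mul_add_two_succ (p : ℕ) :
    (2 * p + 2).choose (p + 1) = 2 * (2 * p + 1).choose p := by
  rw [choose_succ_succ, choose_symm_half]
  ring

theorem factorial_two_mul_add_one_div_factorial_succ (p : ℕ) :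
    (2 * p + 1)! / (p + 1)! = p ! * (2 * p + 1).choose p := by
  rw [← descFactorial_eq_factorial_mul_choose, descFactorial_eq_div (by omega),
    show 2 * p + 1 - p = p + 1 by omega]

def summand (p i m : ℕ) : ℤ :=
  (-1) ^ i * p.choose i * (p + 2).choose (m + 1) * p.choose m * (i : ℤ) ^ (p - m)
    * ((i : ℤ) - p) ^ m

theorem sum_range_sum_summand (p : ℕ) :
    ∑ i ∈ range (p + 1), ∑ m ∈ range (p + 1), summand p i m
      = 2 * (-1) ^ p * (p ! * (2 * p + 1).choose p) := by
  have hinner : ∀ m ∈ range (p + 1), ∑ i ∈ range (p + 1), summand p i m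
      = (p + 2).choose (m + 1) * p.choose m * ((-1) ^ p * p !) := by
    intro m hm
    rw [← sum_range_alternating_choose_mul_pow_mul_sub_pow (p - m) m
      (Nat.sub_add_cancel (Nat.lt_succ_iff.mp (mem_range.mp hm))), mul_sum]
    exact sum_congr rfl fun i _ ↦ by unfold summand; ring
  have hvandermonde : ∑ m ∈ range (p + 1), ((p + 2).choose (m + 1) * p.choose m : ℤ)
      = 2 * (2 * p + 1).choose p := by
    have h := sum_range_choose_succ_mul_choose p (p + 2)
    rw [show p + 2 + p = 2 * p + 2 by ring, choose_two_mul_add_two_succ] at h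
    exact_mod_cast h
  rw [sum_comm, sum_congr rfl hinner, ← sum_mul, hvandermonde]
  ring

theorem sum_summand_zero (p : ℕ) :
    ∑ m ∈ range (p + 1), summand p 0 m = (-1) ^ p * (p + 2) * p ^ p := by
  rw [sum_eq_single_of_mem p (self_mem_range_succ p) fun m hm hmp ↦ ?_]
  · have h : (p + 2).choose (p + 1) = p + 2 := choose_succ_self_right (p + 1)
    simp only [summand, h, choose_zero_right, choose_self, Nat.sub_self, Nat.cast_zero, zero_sub]
    rw [neg_pow]
    push_cast
    ring
  · rw [summand, Nat.cast_zero, zero_pow (by have := mem_range.mp hm; omega)]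
    ring

theorem sum_summand_self (p : ℕ) :
    ∑ m ∈ range (p + 1), summand p p m = (-1) ^ p * (p + 2) * p ^ p := by
  rw [sum_eq_single_of_mem 0 (mem_range.mpr p.succ_pos) fun m _ hm ↦ ?_]
  · simp only [summand, choose_self, zero_add, choose_one_right, choose_zero_right, Nat.sub_zero,
      sub_self, pow_zero]
    push_cast
    ring
  · rw [summand, sub_self, zero_pow hm, mul_zero]

theorem stmt_4 (p : ℕ) (hp : 0 < p) :
    ∑ i ∈ Finset.Icc 1 (p - 1), ∑ m ∈ Finset.range (p + 1),
        (-1 : ℤ) ^ i * (p.choose i : ℤ) * ((p + 2).choose (m + 1) : ℤ)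
          * (p.choose m : ℤ) * (i : ℤ) ^ (p - m) * ((i : ℤ) - (p : ℤ)) ^ m
      = 2 * (-1 : ℤ) ^ p *
          (((2 * p + 1).factorial / (p + 1).factorial : ℕ) - (p + 2) * (p : ℤ) ^ p) := by
  calc _ = ∑ i ∈ Icc 1 (p - 1), ∑ m ∈ range (p + 1), summand p i m := rfl
    _ = 2 * (-1) ^ p * (p ! * (2 * p + 1).choose p) - (-1) ^ p * (p + 2) * p ^ p
          - (-1) ^ p * (p + 2) * p ^ p := by
      rw [sum_Icc_one_pred_eq_sub _ hp, sum_range_sum_summand, sum_summand_zero, sum_summand_self]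
    _ = _ := by
      rw [factorial_two_mul_add_one_div_factorial_succ]
      push_cast
      ring
end

section
/- Let D_0 be a symmetric positive definite (p-1)×(p-1) real matrix and M_1 a symmetric positive definite p×p real matrix. Let D_1 be the p×p block matrix with a zero in the (1,1) position, zero first row and column, and D_0 in the lower-right block. Define D̂ = D_1 ⊗ M_1 + M_1 ⊗ D_1 (Kronecker products), a p²×p² matrix. Then the (1,1) cofactor of D̂ is nonzero, i.e., the submatrix obtained by deleting the first row and first column of D̂ is invertible. -/
/-!
A vector `y` in the kernel of `D̂` lies in the kernels of both positive semidefinite summands.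
As `M₁` is invertible, `(D₁ ⊗ M₁) y = 0` puts every column `y(·, l)` into `ker D₁ = span e₀`, and
`(M₁ ⊗ D₁) y = 0` puts every row `y(k, ·)` there, so `y` is supported at `(0, 0)`. For a positive
semidefinite matrix whose kernel vectors all vanish off one index, the principal submatrix
obtained by deleting that index is positive definite, as its quadratic form is that of the
original matrix on vectors extended by zero.
-/

open Matrix Kronecker

open scoped ComplexOrder

theorem Fintype.sum_extend_zero {ι κ M β : Type*} [Fintype ι] [Fintype κ] [AddCommMonoid M]
    [Zero β] {e : κ → ι} (he : Function.Injective e) (x : κ → β) (f : ι → β → M)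
    (hf : ∀ i, f i 0 = 0) :
    ∑ i, f i (Function.extend e x 0 i) = ∑ k, f (e k) (x k) := by
  classical
  rw [← Finset.sum_subset (Finset.subset_univ (Finset.univ.map ⟨e, he⟩)), Finset.sum_map]
  · exact Finset.sum_congr rfl fun k _ => by simp [he.extend_apply]
  · intro i _ hi
    rw [Function.extend_apply' _ _ _ fun ⟨k, hk⟩ => hi (by simp [← hk]), Pi.zero_apply, hf]

namespace Matrix

section Kronecker

variable {m n R : Type*} [Fintype m] [CommRing R]

theorem mul_eq_zero_iff_forall_mulVec_col {l : Type*} (A : Matrix l m R) (X : Matrix m n R) :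
    A * X = 0 ↔ ∀ j, A *ᵥ (fun i => X i j) = 0 := by
  simp only [← Matrix.ext_iff, funext_iff, mul_apply, mulVec, dotProduct, zero_apply,
    Pi.zero_apply]
  exact forall_comm

variable [Fintype n] [DecidableEq n]

theorem kronecker_mulVec_eq_zero_iff_of_isUnit_right {A : Matrix m m R} {B : Matrix n n R}
    (hB : IsUnit B) (v : m × n → R) :
    (A ⊗ₖ B) *ᵥ v = 0 ↔ ∀ j, A *ᵥ (fun i => v (i, j)) = 0 := by
  have := hB.invertible
  obtain ⟨X, rfl⟩ : ∃ X : Matrix n m R, v = vec X := ⟨of fun j i => v (i, j), rfl⟩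
  rw [kronecker_mulVec_vec, ← vec_zero, vec_inj, Matrix.mul_assoc, ← Matrix.mul_zero B,
    mul_right_inj_of_invertible, ← transpose_eq_zero, transpose_mul, transpose_transpose,
    mul_eq_zero_iff_forall_mulVec_col]
  rfl

theorem kronecker_mulVec_eq_zero_iff_of_isUnit_left {A : Matrix m m R} {B : Matrix n n R}
    (hB : IsUnit B) (v : n × m → R) :
    (B ⊗ₖ A) *ᵥ v = 0 ↔ ∀ i, A *ᵥ (fun j => v (i, j)) = 0 := by
  have := ((isUnit_transpose B).mpr hB).invertible
  obtain ⟨X, rfl⟩ : ∃ X : Matrix m n R, v = vec X := ⟨of fun j i => v (i, j), rfl⟩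
  rw [kronecker_mulVec_vec, ← vec_zero, vec_inj, ← Matrix.zero_mul Bᵀ,
    mul_left_inj_of_invertible, mul_eq_zero_iff_forall_mulVec_col]
  rfl

end Kronecker

section ZeroBorder

variable {n : ℕ} {R : Type*}

def zeroBorder [Zero R] (D : Matrix (Fin n) (Fin n) R) : Matrix (Fin (n + 1)) (Fin (n + 1)) R :=
  of fun i j => if hi : i = 0 then 0 else if hj : j = 0 then 0 else D (i.pred hi) (j.pred hj)

section Zero

variable [Zero R] (D : Matrix (Fin n) (Fin n) R)

@[simp] theorem zeroBorder_zero_left (j : Fin (n + 1)) : zeroBorder D 0 j = 0 := rfl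

@[simp] theorem zeroBorder_zero_right (i : Fin (n + 1)) : zeroBorder D i 0 = 0 := by
  by_cases hi : i = 0 <;> simp [zeroBorder, hi]

@[simp] theorem zeroBorder_succ_succ (i j : Fin n) : zeroBorder D i.succ j.succ = D i j := by
  simp [zeroBorder, Fin.succ_ne_zero]

end Zero

variable [CommRing R]

@[simp] theorem zeroBorder_mulVec_zero (D : Matrix (Fin n) (Fin n) R) (v : Fin (n + 1) → R) :
    (zeroBorder D *ᵥ v) 0 = 0 := by
  simp [mulVec, dotProduct]

theorem zeroBorder_mulVec_succ (D : Matrix (Fin n) (Fin n) R) (v : Fin (n + 1) → R) (i : Fin n) :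
    (zeroBorder D *ᵥ v) i.succ = (D *ᵥ Fin.tail v) i := by
  simp [mulVec, dotProduct, Fin.sum_univ_succ, Fin.tail]

theorem dotProduct_zeroBorder_mulVec [StarRing R] (D : Matrix (Fin n) (Fin n) R)
    (v : Fin (n + 1) → R) :
    star v ⬝ᵥ zeroBorder D *ᵥ v = star (Fin.tail v) ⬝ᵥ D *ᵥ Fin.tail v := by
  simp [dotProduct, Fin.sum_univ_succ, zeroBorder_mulVec_succ, Fin.tail]

theorem IsHermitian.zeroBorder [StarRing R] {D : Matrix (Fin n) (Fin n) R} (hD : D.IsHermitian) :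
    (zeroBorder D).IsHermitian := by
  ext i j
  cases i using Fin.cases <;> cases j using Fin.cases <;> simp only [conjTranspose_apply,
    zeroBorder_zero_left, zeroBorder_zero_right, zeroBorder_succ_succ, star_zero, hD.apply]

theorem PosSemidef.zeroBorder [PartialOrder R] [StarRing R] {D : Matrix (Fin n) (Fin n) R}
    (hD : D.PosSemidef) : (zeroBorder D).PosSemidef :=
  .of_dotProduct_mulVec_nonneg hD.isHermitian.zeroBorder fun v => by
    simpa only [dotProduct_zeroBorder_mulVec] using hD.dotProduct_mulVec_nonneg _

theorem eq_zero_of_zeroBorder_mulVec_eq_zero {D : Matrix (Fin n) (Fin n) R}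
    (hD : Function.Injective D.mulVec) {v : Fin (n + 1) → R} (hv : zeroBorder D *ᵥ v = 0)
    {i : Fin (n + 1)} (hi : i ≠ 0) : v i = 0 := by
  obtain ⟨i, rfl⟩ := Fin.exists_succ_eq.mpr hi
  have : D *ᵥ Fin.tail v = 0 := funext fun k => by rw [← zeroBorder_mulVec_succ, hv]; rfl
  exact congrFun (hD (this.trans (mulVec_zero D).symm)) i

end ZeroBorder

variable {𝕜 ι κ : Type*} [RCLike 𝕜] [Fintype ι] [Fintype κ]

theorem dotProduct_submatrix_mulVec_eq_extend (A : Matrix ι ι 𝕜) {e : κ → ι}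
    (he : Function.Injective e) (x : κ → 𝕜) :
    star x ⬝ᵥ A.submatrix e e *ᵥ x =
      star (Function.extend e x 0) ⬝ᵥ A *ᵥ Function.extend e x 0 := by
  simp only [dotProduct, mulVec, Pi.star_apply]
  rw [Fintype.sum_extend_zero he x (fun i b => star b * ∑ j, A i j * Function.extend e x 0 j)
    (by simp)]
  refine Finset.sum_congr rfl fun k _ => ?_
  rw [Fintype.sum_extend_zero he x (fun j b => A (e k) j * b) (by simp)]
  rfl

theorem PosSemidef.posDef_submatrix_of_mulVec_eq_zero {A : Matrix ι ι 𝕜} (hA : A.PosSemidef)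
    {e : κ → ι} (he : Function.Injective e) (hker : ∀ v, A *ᵥ v = 0 → ∀ k, v (e k) = 0) :
    (A.submatrix e e).PosDef := by
  refine .of_dotProduct_mulVec_pos (hA.isHermitian.submatrix e) fun x hx => ?_
  rw [dotProduct_submatrix_mulVec_eq_extend A he]
  refine (hA.dotProduct_mulVec_nonneg _).lt_of_ne' fun h => hx (funext fun k => ?_)
  rw [← he.extend_apply x 0 k]
  exact hker _ ((hA.dotProduct_mulVec_zero_iff _).mp h) k

theorem PosSemidef.add_mulVec_eq_zero_iff {A B : Matrix ι ι 𝕜} (hA : A.PosSemidef)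
    (hB : B.PosSemidef) (v : ι → 𝕜) : (A + B) *ᵥ v = 0 ↔ A *ᵥ v = 0 ∧ B *ᵥ v = 0 := by
  refine ⟨fun h => ?_, fun ⟨hAv, hBv⟩ => by rw [add_mulVec, hAv, hBv, add_zero]⟩
  have hsum : star v ⬝ᵥ A *ᵥ v + star v ⬝ᵥ B *ᵥ v = 0 := by
    rw [← dotProduct_add, ← add_mulVec, h, dotProduct_zero]
  rw [← hA.dotProduct_mulVec_zero_iff, ← hB.dotProduct_mulVec_zero_iff]
  exact (add_eq_zero_iff_of_nonneg (hA.dotProduct_mulVec_nonneg v)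
    (hB.dotProduct_mulVec_nonneg v)).mp hsum

end Matrix

theorem stmt_8 (n : ℕ)
    (D0 : Matrix (Fin n) (Fin n) ℝ) (hD0 : D0.PosDef)
    (M1 : Matrix (Fin (n + 1)) (Fin (n + 1)) ℝ) (hM1 : M1.PosDef)
    (D1 : Matrix (Fin (n + 1)) (Fin (n + 1)) ℝ)
    (hD1 : D1 = Matrix.of fun i j : Fin (n + 1) =>
      if hi : i = 0 then 0 else if hj : j = 0 then 0 else D0 (i.pred hi) (j.pred hj))
    (Dhat : Matrix (Fin (n + 1) × Fin (n + 1)) (Fin (n + 1) × Fin (n + 1)) ℝ)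
    (hDhat : Dhat = D1 ⊗ₖ M1 + M1 ⊗ₖ D1) :
    (Matrix.of fun a b : {q : Fin (n + 1) × Fin (n + 1) // q ≠ (0, 0)} =>
        Dhat a.val b.val).det ≠ 0 := by
  change D1 = zeroBorder D0 at hD1
  subst hD1 hDhat
  have hD1 : (zeroBorder D0).PosSemidef := hD0.posSemidef.zeroBorder
  have hD1ker {v} (hv : zeroBorder D0 *ᵥ v = 0) {i} (hi : i ≠ 0) : v i = 0 :=
    eq_zero_of_zeroBorder_mulVec_eq_zero (mulVec_injective_iff_isUnit.mpr hD0.isUnit) hv hi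
  refine ((hD1.kronecker hM1.posSemidef).add (hM1.posSemidef.kronecker hD1)
    |>.posDef_submatrix_of_mulVec_eq_zero Subtype.val_injective ?_).det_pos.ne'
  rintro v hv ⟨⟨k, l⟩, hkl⟩
  rw [PosSemidef.add_mulVec_eq_zero_iff (hD1.kronecker hM1.posSemidef)
    (hM1.posSemidef.kronecker hD1), kronecker_mulVec_eq_zero_iff_of_isUnit_right hM1.isUnit,
    kronecker_mulVec_eq_zero_iff_of_isUnit_left hM1.isUnit] at hv
  by_cases hk : k = 0
  · exact hD1ker (hv.2 k) fun hl => hkl (by rw [hk, hl])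
  · exact hD1ker (hv.1 l) hk
end

section
/- Let F: [0,b_1]×[0,b_2] → ℝ be twice continuously differentiable in its first variable near (0,0), with F(s,s) = δ_0 s^{σ_1} + o(s^{σ_1}), ∂₁F(s,s) = δ_1 s^{σ_2} + o(s^{σ_2}) as s → 0⁺, σ_1 > 2σ_2 > 0, δ_1 > 0. Then for all sufficiently small s > 0 one has F(s + s^{σ_1/2}, s) > 0 and F(s - s^{σ_1/2}, s) < 0, and hence by the intermediate value theorem there exists s_h with |s_h - s| < s^{σ_1/2} and F(s_h, s) = 0. -/
/-!
Write `h = s ^ (σ1 / 2)`. Since `∂₁²F` is bounded near the origin, Taylor's formula in the first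
variable gives `F (s ± h) s = F s s ± h ∂₁F s s + O(h²)`, with `h² = s ^ σ1`. Both `F s s` and
the remainder are `O(s ^ σ1)`, which is `o(s ^ σ2 * h)` because `σ1 > 2 σ2`, while
`h ∂₁F s s = δ1 s ^ σ2 h + o(s ^ σ2 h)`. Hence `F (s ± h) s` has the sign of `± δ1` for small
`s`, and the intermediate value theorem gives the zero.
-/

open Asymptotics Filter Real Set Topology

theorem abs_sub_sub_mul_le_of_abs_deriv2_le {f f' f'' : ℝ → ℝ} {a y C : ℝ}
    (hf : ∀ x ∈ uIcc a y, HasDerivAt f (f' x) x) (hf' : ∀ x ∈ uIcc a y, HasDerivAt f' (f'' x) x)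
    (hC : ∀ x ∈ uIcc a y, |f'' x| ≤ C) :
    |f y - f a - f' a * (y - a)| ≤ C * (y - a) ^ 2 := by
  have ha : a ∈ uIcc a y := left_mem_uIcc
  have hy : y ∈ uIcc a y := right_mem_uIcc
  have hf'_lip : ∀ x ∈ uIcc a y, ‖f' x - f' a‖ ≤ C * |y - a| := fun x hx =>
    calc ‖f' x - f' a‖ ≤ C * ‖x - a‖ :=
          convex_uIcc a y |>.norm_image_sub_le_of_norm_hasDerivWithin_le
            (fun z hz => (hf' z hz).hasDerivWithinAt) hC ha hx
      _ ≤ C * |y - a| :=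
          mul_le_mul_of_nonneg_left (abs_sub_left_of_mem_uIcc hx) ((abs_nonneg _).trans (hC a ha))
  have hg : ∀ x ∈ uIcc a y,
      HasDerivWithinAt (fun z => f z - f' a * z) (f' x - f' a) (uIcc a y) x := fun x hx => by
    simpa using ((hf x hx).fun_sub ((hasDerivAt_id x).const_mul (f' a))).hasDerivWithinAt
  have := convex_uIcc a y |>.norm_image_sub_le_of_norm_hasDerivWithin_le hg hf'_lip ha hy
  rw [Real.norm_eq_abs, Real.norm_eq_abs] at this
  calc |f y - f a - f' a * (y - a)| = |f y - f' a * y - (f a - f' a * a)| := by ring_nf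
    _ ≤ C * |y - a| * |y - a| := this
    _ = C * (y - a) ^ 2 := by rw [mul_assoc, ← sq, sq_abs]

theorem eventually_forall_uIcc_of_eventually_nhds {α : Type*} {l : Filter α} {p : ℝ × ℝ → Prop}
    {a b : ℝ} (hp : ∀ᶠ q in 𝓝 (a, b), p q) {u v w : α → ℝ} (hu : Tendsto u l (𝓝 a))
    (hv : Tendsto v l (𝓝 a)) (hw : Tendsto w l (𝓝 b)) :
    ∀ᶠ t in l, ∀ y ∈ uIcc (u t) (v t), p (y, w t) := by
  rw [nhds_prod_eq, eventually_prod_iff] at hp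
  obtain ⟨pa, hpa, pb, hpb, hp⟩ := hp
  obtain ⟨c, d, hacd, hcd⟩ := mem_nhds_iff_exists_Ioo_subset.mp hpa
  have hIoo := isOpen_Ioo.mem_nhds hacd
  filter_upwards [hu hIoo, hv hIoo, hw hpb] with t hut hvt hwt y hy
  exact hp (hcd (ordConnected_Ioo.uIcc_subset hut hvt hy)) hwt

theorem tendsto_rpow_nhdsGT_zero {a : ℝ} (ha : 0 < a) :
    Tendsto (fun s : ℝ => s ^ a) (𝓝[>] 0) (𝓝 0) := by
  simpa [Real.zero_rpow ha.ne'] using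
    ((Real.continuousAt_rpow_const 0 a (Or.inr ha.le)).tendsto).mono_left nhdsWithin_le_nhds

theorem isLittleO_rpow_rpow_nhdsGT_zero {a b : ℝ} (hab : a < b) :
    (fun s : ℝ => s ^ b) =o[𝓝[>] 0] fun s => s ^ a := by
  have := (isLittleO_one_iff ℝ).2 (tendsto_rpow_nhdsGT_zero (sub_pos.2 hab)) |>.mul_isBigO
    (isBigO_refl (fun s : ℝ => s ^ a) _)
  refine this.congr' ?_ (by simp)
  filter_upwards [self_mem_nhdsWithin] with s (hs : 0 < s)
  rw [← rpow_add hs, sub_add_cancel]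

theorem exists_abs_sub_lt_and_eq_zero_of_neg_of_pos {f : ℝ → ℝ} (hf : Continuous f) {a r : ℝ}
    (hr : 0 ≤ r) (hneg : f (a - r) < 0) (hpos : 0 < f (a + r)) : ∃ x, |x - a| < r ∧ f x = 0 := by
  obtain ⟨x, hx, hfx⟩ :=
    intermediate_value_Ioo (by linarith : a - r ≤ a + r) hf.continuousOn ⟨hneg, hpos⟩
  exact ⟨x, abs_sub_lt_iff.2 ⟨by linarith [hx.2], by linarith [hx.1]⟩, hfx⟩

theorem eventually_pos_of_isLittleO_sub_mul {α : Type*} {l : Filter α} {f g : α → ℝ} {k : ℝ}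
    (h : (fun x => f x - k * g x) =o[l] g) (hk : 0 < k) (hg : ∀ᶠ x in l, 0 < g x) :
    ∀ᶠ x in l, 0 < f x := by
  filter_upwards [h.def (half_pos hk), hg] with x hx hgx
  rw [Real.norm_eq_abs, Real.norm_eq_abs, abs_of_pos hgx] at hx
  nlinarith [neg_abs_le (f x - k * g x)]

section

variable {F F1 F2 : ℝ → ℝ → ℝ} {δ0 δ1 σ1 σ2 : ℝ}

theorem isBigO_taylor_remainder_diag (hd1 : ∀ x s : ℝ, HasDerivAt (fun y => F y s) (F1 x s) x)
    (hd2 : ∀ x s : ℝ, HasDerivAt (fun y => F1 y s) (F2 x s) x)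
    (hF2cont : ContinuousAt (fun q : ℝ × ℝ => F2 q.1 q.2) (0, 0)) (hσ1 : 0 < σ1) (c : ℝ) :
    (fun s => F (s + c * s ^ (σ1 / 2)) s - F s s - F1 s s * (c * s ^ (σ1 / 2)))
      =O[𝓝[>] 0] fun s => s ^ σ1 := by
  set M := |F2 0 0| + 1
  have hM : ∀ᶠ q : ℝ × ℝ in 𝓝 (0, 0), |F2 q.1 q.2| ≤ M :=
    hF2cont.abs.eventually_le_const (lt_add_one _)
  have hs : Tendsto (fun s : ℝ => s) (𝓝[>] 0) (𝓝 0) := nhdsWithin_le_nhds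
  have hshift : Tendsto (fun s : ℝ => s + c * s ^ (σ1 / 2)) (𝓝[>] 0) (𝓝 0) := by
    simpa using hs.add ((tendsto_rpow_nhdsGT_zero (half_pos hσ1)).const_mul c)
  refine IsBigO.of_bound (M * c ^ 2) ?_
  filter_upwards [eventually_forall_uIcc_of_eventually_nhds hM hs hshift hs,
    self_mem_nhdsWithin] with s hbound (hs : 0 < s)
  have := abs_sub_sub_mul_le_of_abs_deriv2_le (fun x _ => hd1 x s) (fun x _ => hd2 x s) hbound
  have hsq : (s ^ (σ1 / 2)) ^ 2 = s ^ σ1 := by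
    rw [← rpow_natCast, ← rpow_mul hs.le]; norm_num
  rw [add_sub_cancel_left, mul_pow, hsq] at this
  rw [Real.norm_eq_abs, Real.norm_eq_abs, abs_of_pos (rpow_pos_of_pos hs _), mul_assoc]
  exact this

theorem isLittleO_shift_sub_mul_rpow (hd1 : ∀ x s : ℝ, HasDerivAt (fun y => F y s) (F1 x s) x)
    (hd2 : ∀ x s : ℝ, HasDerivAt (fun y => F1 y s) (F2 x s) x)
    (hF2cont : ContinuousAt (fun q : ℝ × ℝ => F2 q.1 q.2) (0, 0))
    (hσ : 2 * σ2 < σ1) (hσ2 : 0 < σ2)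
    (hF : (fun s => F s s - δ0 * s ^ σ1) =o[𝓝[>] (0 : ℝ)] fun s => s ^ σ1)
    (hF1 : (fun s => F1 s s - δ1 * s ^ σ2) =o[𝓝[>] (0 : ℝ)] fun s => s ^ σ2) (c : ℝ) :
    (fun s => F (s + c * s ^ (σ1 / 2)) s - c * δ1 * s ^ (σ2 + σ1 / 2))
      =o[𝓝[>] 0] fun s => s ^ (σ2 + σ1 / 2) := by
  have hexp : σ2 + σ1 / 2 < σ1 := by linarith
  have hremainder :=
    (isBigO_taylor_remainder_diag hd1 hd2 hF2cont (by linarith) c).trans_isLittleO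
      (isLittleO_rpow_rpow_nhdsGT_zero hexp)
  have hdiag : (fun s => F s s) =o[𝓝[>] 0] fun s => s ^ (σ2 + σ1 / 2) :=
    ((hF.isBigO.add ((isBigO_refl _ _).const_mul_left δ0)).congr_left
      fun s => sub_add_cancel _ _).trans_isLittleO (isLittleO_rpow_rpow_nhdsGT_zero hexp)
  have hrpow_add : ∀ᶠ s : ℝ in 𝓝[>] 0, s ^ σ2 * s ^ (σ1 / 2) = s ^ (σ2 + σ1 / 2) := by
    filter_upwards [self_mem_nhdsWithin] with s (hs : 0 < s) using (rpow_add hs _ _).symm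
  have hslope : (fun s => (F1 s s - δ1 * s ^ σ2) * (c * s ^ (σ1 / 2)))
      =o[𝓝[>] 0] fun s => s ^ (σ2 + σ1 / 2) :=
    (hF1.mul_isBigO ((isBigO_refl _ _).const_mul_left c)).congr' .rfl hrpow_add
  refine (hremainder.add hdiag |>.add hslope).congr' ?_ .rfl
  filter_upwards [hrpow_add] with s hs
  rw [← hs]; ring

end

theorem stmt_11_general
    (F F1 F2 : ℝ → ℝ → ℝ) (δ0 δ1 σ1 σ2 : ℝ)
    (hσ : 2 * σ2 < σ1) (hσ2 : 0 < σ2) (hδ1 : 0 < δ1)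
    (hd1 : ∀ x s : ℝ, HasDerivAt (fun y => F y s) (F1 x s) x)
    (hd2 : ∀ x s : ℝ, HasDerivAt (fun y => F1 y s) (F2 x s) x)
    (hF2cont : ContinuousAt (fun q : ℝ × ℝ => F2 q.1 q.2) (0, 0))
    (hF : (fun s => F s s - δ0 * s ^ σ1) =o[𝓝[>] (0 : ℝ)] fun s => s ^ σ1)
    (hF1 : (fun s => F1 s s - δ1 * s ^ σ2) =o[𝓝[>] (0 : ℝ)] fun s => s ^ σ2) :
    ∀ᶠ s in 𝓝[>] (0 : ℝ),
      0 < F (s + s ^ (σ1 / 2)) s ∧ F (s - s ^ (σ1 / 2)) s < 0 ∧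
        ∃ sh : ℝ, |sh - s| < s ^ (σ1 / 2) ∧ F sh s = 0 := by
  have hshift := isLittleO_shift_sub_mul_rpow hd1 hd2 hF2cont hσ hσ2 hF hF1
  have hg : ∀ᶠ s : ℝ in 𝓝[>] 0, 0 < s ^ (σ2 + σ1 / 2) := by
    filter_upwards [self_mem_nhdsWithin] with s (hs : 0 < s) using rpow_pos_of_pos hs _
  have hpos := eventually_pos_of_isLittleO_sub_mul (by simpa using hshift 1) hδ1 hg
  have hneg := eventually_pos_of_isLittleO_sub_mul (f := fun s => -F (s - s ^ (σ1 / 2)) s)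
    ((hshift (-1)).neg_left.congr_left fun s => by
      simp only [neg_one_mul, ← sub_eq_add_neg]; ring) hδ1 hg
  filter_upwards [hpos, hneg, self_mem_nhdsWithin] with s hpos hneg (hs : 0 < s)
  rw [neg_pos] at hneg
  have hcont : Continuous fun y => F y s :=
    continuous_iff_continuousAt.2 fun y => (hd1 y s).continuousAt
  exact ⟨hpos, hneg,
    exists_abs_sub_lt_and_eq_zero_of_neg_of_pos hcont (rpow_nonneg hs.le _) hneg hpos⟩

theorem stmt_11 (b1 b2 : ℝ) (hb1 : 0 < b1) (hb2 : 0 < b2)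
    (F F1 F2 : ℝ → ℝ → ℝ) (δ0 δ1 σ1 σ2 : ℝ)
    (hσ : 2 * σ2 < σ1) (hσ2 : 0 < σ2) (hδ1 : 0 < δ1)
    (hd1 : ∀ x s : ℝ, HasDerivAt (fun y => F y s) (F1 x s) x)
    (hd2 : ∀ x s : ℝ, HasDerivAt (fun y => F1 y s) (F2 x s) x)
    (hF2cont : ContinuousAt (fun q : ℝ × ℝ => F2 q.1 q.2) (0, 0))
    (hF : (fun s => F s s - δ0 * s ^ σ1) =o[𝓝[>] (0 : ℝ)] fun s => s ^ σ1)
    (hF1 : (fun s => F1 s s - δ1 * s ^ σ2) =o[𝓝[>] (0 : ℝ)] fun s => s ^ σ2) :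
    ∀ᶠ s in 𝓝[>] (0 : ℝ),
      0 < F (s + s ^ (σ1 / 2)) s ∧ F (s - s ^ (σ1 / 2)) s < 0 ∧
        ∃ sh : ℝ, |sh - s| < s ^ (σ1 / 2) ∧ F sh s = 0 :=
  stmt_11_general F F1 F2 δ0 δ1 σ1 σ2 hσ hσ2 hδ1 hd1 hd2 hF2cont hF hF1
end

section
/- For the Legendre polynomial L_n(s) = (1/(2^n n!)) d^n/ds^n (s²-1)^n, its d-th derivative satisfies L_n^{(d)}(s) = (n!/(2^n (n-d)!)) Σ_{m=0}^{n-d} binom(n+d, m+d) * binom(n-d, m) * (s+1)^{n-m-d} * (s-1)^m, for all 0 ≤ d ≤ n. -/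
/-!
Write `(s² - 1)ⁿ = (s - 1)ⁿ (s + 1)ⁿ` and apply the Leibniz rule to its `(n + d)`-th derivative.
The `k`-th term survives only when both factors are differentiated at most `n` times, i.e. for
`k = m + d` with `m ≤ n - d`, and then it is a multiple of `(s - 1)ᵐ (s + 1)ⁿ⁻ᵐ⁻ᵈ`; the two
descending factorials that appear combine with `1 / (2ⁿ n!)` into `n! / (2ⁿ (n - d)!) · C(n - d, m)`.
-/

open Polynomial Finset

theorem Polynomial.iteratedDeriv_eval {𝕜 : Type*} [NontriviallyNormedField 𝕜] (p : 𝕜[X])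
    (k : ℕ) : iteratedDeriv k (fun x => p.eval x) = fun x => (derivative^[k] p).eval x := by
  induction k with
  | zero => simp
  | succ k ih =>
    rw [iteratedDeriv_succ, ih, Function.iterate_succ_apply']
    funext x
    exact Polynomial.deriv _

theorem Nat.descFactorial_sub_mul_descFactorial_add_mul_factorial {n m d : ℕ} (h : m + d ≤ n) :
    n.descFactorial (n - m) * n.descFactorial (m + d) * (n - d).factorial =
      n.factorial * n.factorial * (n - d).choose m := by
  have hA := factorial_mul_descFactorial (by omega : n - m ≤ n)
  have hB := factorial_mul_descFactorial h
  have hC := choose_mul_factorial_mul_factorial (by omega : m ≤ n - d)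
  rw [Nat.sub_sub_self (by omega)] at hA
  rw [Nat.sub_sub, add_comm d m] at hC
  apply Nat.eq_of_mul_eq_mul_right (by positivity : 0 < m.factorial * (n - (m + d)).factorial)
  calc _ = m.factorial * n.descFactorial (n - m) * ((n - (m + d)).factorial *
          n.descFactorial (m + d)) * (n - d).factorial := by ring
    _ = n.factorial * n.factorial *
          ((n - d).choose m * m.factorial * (n - (m + d)).factorial) := by rw [hA, hB, hC]
    _ = _ := by ring

theorem Polynomial.iterate_derivative_X_sub_C_pow_mul_X_sub_C_pow {R : Type*} [CommRing R]
    (a b : R) {n d : ℕ} (hd : d ≤ n) :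
    derivative^[n + d] ((X - C a) ^ n * (X - C b) ^ n) =
      ∑ m ∈ range (n - d + 1), ((n + d).choose (m + d) * n.descFactorial (n - m) *
        n.descFactorial (m + d)) • ((X - C a) ^ m * (X - C b) ^ (n - m - d)) := by
  let term k := (n + d).choose k •
    (derivative^[n + d - k] ((X - C a) ^ n) * derivative^[k] ((X - C b) ^ n))
  have vanishing : ∀ k ∈ range (n + d).succ, k ∉ Ico d (n + 1) → term k = 0 := by
    intro k _ hk
    rw [mem_Ico, not_and_or, not_le, not_lt] at hk
    simp only [term, iterate_derivative_X_sub_pow]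
    rcases hk with hk | hk
    · rw [Nat.descFactorial_eq_zero_iff_lt.2 (by omega : n < n + d - k)]; simp
    · rw [Nat.descFactorial_eq_zero_iff_lt.2 (by omega : n < k)]; simp
  rw [iterate_derivative_mul, ← sum_subset (fun k hk => ?_) vanishing, sum_Ico_eq_sum_range,
    show n + 1 - d = n - d + 1 by omega]
  · refine sum_congr rfl fun m hm => ?_
    rw [mem_range] at hm
    simp only [term, iterate_derivative_X_sub_pow, smul_mul_smul_comm, smul_smul]
    rw [add_comm d m, show n + d - (m + d) = n - m by omega, show n - (n - m) = m by omega,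
      Nat.sub_sub, mul_assoc]
  · rw [mem_Ico] at hk; rw [mem_range]; omega

theorem stmt_13 (n d : ℕ) (hd : d ≤ n)
    (L : ℝ → ℝ)
    (hL : ∀ s : ℝ, L s =
      (1 / (2 ^ n * (n.factorial : ℝ))) * iteratedDeriv n (fun x : ℝ => (x ^ 2 - 1) ^ n) s) :
    ∀ s : ℝ, iteratedDeriv d L s =
      ((n.factorial : ℝ) / (2 ^ n * ((n - d).factorial : ℝ))) *
        ∑ m ∈ Finset.range (n - d + 1),
          ((n + d).choose (m + d) : ℝ) * ((n - d).choose m : ℝ) *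
            (s + 1) ^ (n - m - d) * (s - 1) ^ m := by
  intro s
  set P : ℝ[X] := (X - C 1) ^ n * (X - C (-1)) ^ n
  have hP : (fun x : ℝ => (x ^ 2 - 1) ^ n) = fun x => P.eval x := by
    funext x; simp only [P, eval_mul, eval_pow, eval_sub, eval_X, eval_C]
    rw [← mul_pow]; ring
  have hL' : L = fun x => (C (1 / (2 ^ n * (n.factorial : ℝ))) * derivative^[n] P).eval x := by
    funext x; rw [hL, hP, iteratedDeriv_eval, eval_mul, eval_C]
  rw [hL', iteratedDeriv_eval, iterate_derivative_C_mul, ← Function.iterate_add_apply,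
    add_comm d n, iterate_derivative_X_sub_C_pow_mul_X_sub_C_pow _ _ hd]
  simp only [eval_mul, eval_C, eval_finsetSum, eval_natCast, eval_pow, eval_sub, eval_X,
    nsmul_eq_mul, sub_neg_eq_add, mul_sum]
  refine sum_congr rfl fun m hm => ?_
  have hcoeff := congrArg (Nat.cast (R := ℝ))
    (Nat.descFactorial_sub_mul_descFactorial_add_mul_factorial (by grind : m + d ≤ n))
  push_cast at hcoeff ⊢
  field_simp
  linear_combination ((n + d).choose (m + d) * (s - 1) ^ m * (s + 1) ^ (n - m - d) : ℝ) * hcoeff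
end
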